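/- For any ĉ, c ∈ ℝ^d and any α ∈ ℝ, ℓ_SPO(ĉ, c) ≤ ξ_S(c − αĉ) + α z*(ĉ) − z*(c); in particular ℓ_SPO(ĉ, c) ≤ inf_α { ξ_S(c − αĉ) + α z*(ĉ) } − z*(c). -/
import Mathlib


open MeasureTheory Set

noncomputable section

/-- Dot product on `Fin d → ℝ`. -/
def dotp {d : ℕ} (c w : Fin d → ℝ) : ℝ := ∑ i, c i * w i

/-- Optimal value `z*(c) = min_{w ∈ S} cᵀw`. -/
def zS {d : ℕ} (S : Set (Fin d → ℝ)) (c : Fin d → ℝ) : ℝ := sInf ((fun w => dotp c w) '' S)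

/-- Support function `ξ_S(c) = max_{w ∈ S} cᵀw`. -/
def xiS {d : ℕ} (S : Set (Fin d → ℝ)) (c : Fin d → ℝ) : ℝ := sSup ((fun w => dotp c w) '' S)

/-- Optimal solution set `W*(c) = argmin_{w ∈ S} cᵀw`. -/
def WS {d : ℕ} (S : Set (Fin d → ℝ)) (c : Fin d → ℝ) : Set (Fin d → ℝ) :=
  {w | w ∈ S ∧ ∀ u ∈ S, dotp c w ≤ dotp c u}

/-- SPO loss `ℓ_SPO(ĉ, c) = max_{w ∈ W*(ĉ)} cᵀw − z*(c)`. -/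
def lSPO {d : ℕ} (S : Set (Fin d → ℝ)) (chat c : Fin d → ℝ) : ℝ :=
  sSup ((fun w => dotp c w) '' WS S chat) - zS S c

/-- SPO+ loss `ℓ_SPO+(ĉ, c) = ξ_S(c − 2ĉ) + 2ĉᵀw*(c) − z*(c)` given a selection `wstar`. -/
def lSPOp {d : ℕ} (S : Set (Fin d → ℝ)) (wstar : (Fin d → ℝ) → (Fin d → ℝ))
    (chat c : Fin d → ℝ) : ℝ :=
  xiS S (c - (2 : ℝ) • chat) + 2 * dotp chat (wstar c) - zS S c


lemma dotp_cont {d : ℕ} (c : Fin d → ℝ) : Continuous fun w : Fin d → ℝ => dotp c w := by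
  unfold dotp
  exact continuous_finset_sum _ fun i _ => (continuous_const.mul (continuous_apply i))

lemma dotp_sub_smul {d : ℕ} (c chat w : Fin d → ℝ) (α : ℝ) :
    dotp (c - α • chat) w = dotp c w - α * dotp chat w := by
  unfold dotp
  rw [Finset.mul_sum, ← Finset.sum_sub_distrib]
  congr 1; ext i
  simp [Pi.sub_apply, Pi.smul_apply, smul_eq_mul]; ring

/-- weak duality: for any `α`, `ℓ_SPO(ĉ,c) ≤ ξ_S(c − αĉ) + α z*(ĉ) − z*(c)`;
in particular `ℓ_SPO(ĉ,c) ≤ inf_α { ξ_S(c − αĉ) + α z*(ĉ) } − z*(c)`. -/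
theorem spo_loss_weak_duality {d : ℕ} (S : Set (Fin d → ℝ))
    (hS : S.Nonempty) (hSc : IsCompact S) (hScv : Convex ℝ S)
    (chat c : Fin d → ℝ) :
    (∀ α : ℝ, lSPO S chat c ≤ xiS S (c - α • chat) + α * zS S chat - zS S c) ∧
      lSPO S chat c ≤
        sInf (Set.range fun α : ℝ => xiS S (c - α • chat) + α * zS S chat) - zS S c := by
  obtain ⟨w0, hw0S, hw0min⟩ := hSc.exists_isMinOn hS (dotp_cont chat).continuousOn
  have hz : zS S chat = dotp chat w0 := by
    apply le_antisymm
    · exact csInf_le ⟨dotp chat w0, fun x ⟨u, hu, hxu⟩ => hxu ▸ hw0min hu⟩ ⟨w0, hw0S, rfl⟩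
    · exact le_csInf (hS.image _) (fun x ⟨u, hu, hxu⟩ => hxu ▸ hw0min hu)
  have key : ∀ α : ℝ, lSPO S chat c + zS S c ≤ xiS S (c - α • chat) + α * zS S chat := by
    intro α
    have hW0 : w0 ∈ WS S chat := ⟨hw0S, fun u hu => hw0min hu⟩
    have hbdd : BddAbove ((fun w => dotp (c - α • chat) w) '' S) :=
      (hSc.image (dotp_cont _)).bddAbove
    have : sSup ((fun w => dotp c w) '' WS S chat) ≤ xiS S (c - α • chat) + α * zS S chat := by
      apply csSup_le (Set.Nonempty.image _ ⟨w0, hW0⟩)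
      rintro x ⟨w, ⟨hwS, hwmin⟩, rfl⟩
      have hwz : dotp chat w = zS S chat := by
        rw [hz]; exact le_antisymm (hwmin w0 hw0S) (hw0min hwS)
      have h1 : dotp (c - α • chat) w ≤ xiS S (c - α • chat) :=
        le_csSup hbdd ⟨w, hwS, rfl⟩
      have := dotp_sub_smul c chat w α
      simp only [← hwz]
      linarith
    unfold lSPO; linarith
  constructor
  · intro α; have := key α; linarith
  · have h2 : lSPO S chat c + zS S c ≤
        sInf (Set.range fun α : ℝ => xiS S (c - α • chat) + α * zS S chat) := by
      apply le_csInf (Set.range_nonempty _)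
      rintro b ⟨α, rfl⟩; exact key α
    linarith
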